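/- arXiv:1405.4333 — 3 statements merged into one kernel-verified Lean document; each statement's English description precedes it below -/
import Mathlib

section
/- For i ≠ j, the principal ideal (z_j) of A_n^{Q,Γ}(K) is not contained in the principal ideal (z_i). -/
/-!  Multiparameter quantized Weyl algebras (Maltsiniotis).
Generators: `Sum.inl i ↦ xᵢ`, `Sum.inr i ↦ yᵢ`. -/

noncomputable section

open scoped BigOperators

/-- The free algebra generator corresponding to `xᵢ`. -/
def MQW.freeX (K : Type*) [CommRing K] (n : ℕ) (i : Fin n) :
    FreeAlgebra K (Fin n ⊕ Fin n) := FreeAlgebra.ι K (Sum.inl i)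

/-- The free algebra generator corresponding to `yᵢ`. -/
def MQW.freeY (K : Type*) [CommRing K] (n : ℕ) (i : Fin n) :
    FreeAlgebra K (Fin n ⊕ Fin n) := FreeAlgebra.ι K (Sum.inr i)

/-- The defining relations of the multiparameter quantized Weyl algebra
`A_n^{Q,Γ}(K)`. -/
inductive MQW.rel (K : Type*) [CommRing K] (n : ℕ) (Q : Fin n → K) (Γ : Fin n → Fin n → K) :
    FreeAlgebra K (Fin n ⊕ Fin n) → FreeAlgebra K (Fin n ⊕ Fin n) → Prop
  | yy (i j : Fin n) :
      MQW.rel K n Q Γ (MQW.freeY K n i * MQW.freeY K n j)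
        (algebraMap K _ (Γ i j) * (MQW.freeY K n j * MQW.freeY K n i))
  | xx (i j : Fin n) (h : i < j) :
      MQW.rel K n Q Γ (MQW.freeX K n i * MQW.freeX K n j)
        (algebraMap K _ (Q i * Γ i j) * (MQW.freeX K n j * MQW.freeX K n i))
  | xyLT (i j : Fin n) (h : i < j) :
      MQW.rel K n Q Γ (MQW.freeX K n i * MQW.freeY K n j)
        (algebraMap K _ (Γ j i) * (MQW.freeY K n j * MQW.freeX K n i))
  | xyGT (i j : Fin n) (h : j < i) :
      MQW.rel K n Q Γ (MQW.freeX K n i * MQW.freeY K n j)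
        (algebraMap K _ (Q j * Γ j i) * (MQW.freeY K n j * MQW.freeX K n i))
  | weyl (j : Fin n) :
      MQW.rel K n Q Γ (MQW.freeX K n j * MQW.freeY K n j)
        (algebraMap K _ (Q j) * (MQW.freeY K n j * MQW.freeX K n j) + 1 +
          ∑ k ∈ Finset.univ.filter (fun k : Fin n => k < j),
            algebraMap K _ (Q k - 1) * (MQW.freeY K n k * MQW.freeX K n k))

/-- The multiparameter quantized Weyl algebra `A_n^{Q,Γ}(K)`. -/
abbrev MQWeyl (K : Type*) [CommRing K] (n : ℕ) (Q : Fin n → K) (Γ : Fin n → Fin n → K) :=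
  RingQuot (MQW.rel K n Q Γ)

namespace MQW

variable (K : Type*) [CommRing K] (n : ℕ) (Q : Fin n → K) (Γ : Fin n → Fin n → K)

/-- The generator `xᵢ` of `A_n^{Q,Γ}(K)`. -/
def x (i : Fin n) : MQWeyl K n Q Γ := RingQuot.mkAlgHom K (MQW.rel K n Q Γ) (freeX K n i)

/-- The generator `yᵢ` of `A_n^{Q,Γ}(K)`. -/
def y (i : Fin n) : MQWeyl K n Q Γ := RingQuot.mkAlgHom K (MQW.rel K n Q Γ) (freeY K n i)

/-- `z m = 1 + ∑_{k=1}^{m} (q_k - 1) y_k x_k` (1-indexed count `m`; here `k`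
ranges over the 0-indexed positions `< m`).  In particular `z 0 = 1`. -/
def z (m : ℕ) : MQWeyl K n Q Γ :=
  1 + ∑ k ∈ Finset.univ.filter (fun k : Fin n => (k : ℕ) < m),
      algebraMap K _ (Q k - 1) * (y K n Q Γ k * x K n Q Γ k)

end MQW

/-- A two-sided ideal `P` of a (possibly noncommutative) ring is prime if it is proper
and whenever `a R b ⊆ P` one has `a ∈ P` or `b ∈ P`. -/
def TwoSidedIdeal.IsPrimeTS {R : Type*} [Ring R] (P : TwoSidedIdeal R) : Prop :=
  P ≠ ⊤ ∧ ∀ a b : R, (∀ r : R, a * r * b ∈ P) → a ∈ P ∨ b ∈ P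

/-!
`(z_{j+1})` is not contained in `(z_{i+1})` as soon as some representation kills `z_{i+1}` but
not `z_{j+1}`. Such a representation lives on the space with basis `e_f`, `f ∈ ℤⁿ`: `y_k` raises
and `x_k` lowers the `k`-th coordinate of `f`, with scalar factors chosen so that the defining
relations hold. Then `z_m` acts diagonally, by `lam m * ∏_{l < m} q_l ^ f_l` on `e_f`, where
`lam : ℕ → K` is an arbitrary sequence with `lam 0 = 1`; taking `lam` to vanish exactly at
`i + 1` gives the required representation.
-/

theorem TwoSidedIdeal.span_singleton_not_le_of_map_eq_zero {R S F : Type*} [Ring R] [Ring S]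
    [FunLike F R S] [RingHomClass F R S] (φ : F) {a b : R} (ha : φ a = 0) (hb : φ b ≠ 0) :
    ¬ TwoSidedIdeal.span {b} ≤ TwoSidedIdeal.span {a} := by
  intro hle
  have hker : TwoSidedIdeal.span {a} ≤ TwoSidedIdeal.ker φ :=
    TwoSidedIdeal.span_le.mpr <| Set.singleton_subset_iff.mpr <| (TwoSidedIdeal.mem_ker φ).mpr ha
  exact hb <| (TwoSidedIdeal.mem_ker φ).mp <| hker <| hle <| TwoSidedIdeal.subset_span rfl

theorem Finset.prod_zpow_add_single {ι G : Type*} [DecidableEq ι] [CommGroupWithZero G]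
    (a : ι → G) (s : Finset ι) (ha : ∀ l ∈ s, a l ≠ 0) (f : ι → ℤ) (l : ι) (e : ℤ) :
    ∏ l' ∈ s, a l' ^ (f + Pi.single l e : ι → ℤ) l' =
      (∏ l' ∈ s, a l' ^ f l') * if l ∈ s then a l ^ e else 1 := by
  rw [← Finset.prod_ite_eq' s l (fun l' => a l' ^ e), ← Finset.prod_mul_distrib]
  refine Finset.prod_congr rfl fun l' hl' => ?_
  rw [Pi.add_apply, zpow_add₀ (ha l' hl')]
  rcases eq_or_ne l' l with rfl | h <;> simp [*]

namespace MQW.WeightRep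

open Finset Finsupp

variable {K : Type*} [Field K] {n : ℕ} (Q : Fin n → K) (Γ : Fin n → Fin n → K) (lam : ℕ → K)

def yTwist (k : Fin n) (f : Fin n → ℤ) : K :=
  ∏ l ∈ univ.filter (· < k), Γ k l ^ f l

def xTwist (k : Fin n) (f : Fin n → ℤ) : K :=
  ∏ l ∈ univ.filter (· < k), (Q l * Γ l k) ^ f l

def qMonomial (m : ℕ) (f : Fin n → ℤ) : K :=
  ∏ l ∈ univ.filter (fun l : Fin n => (l : ℕ) < m), Q l ^ f l

/-- Forced by the Weyl relation: with it, `y_k x_k` acts on `e_f` by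
`(w (k + 1) - w k) / (q_k - 1)`, where `w m = lam m * qMonomial Q m f` is to be the eigenvalue
of `z_m` on `e_f`. -/
def xWeight (k : Fin n) (m : ℤ) : K :=
  (lam (k + 1) * Q k ^ m - lam k) / (Q k - 1)

variable {Q Γ}

lemma yTwist_add_single (hΓ : ∀ a b, Γ a b * Γ b a = 1) (k l : Fin n) (f : Fin n → ℤ) (e : ℤ) :
    yTwist Γ k (f + Pi.single l e) = yTwist Γ k f * if l < k then Γ k l ^ e else 1 := by
  simp only [yTwist]
  rw [prod_zpow_add_single _ _ fun l' _ => left_ne_zero_of_mul_eq_one (hΓ k l')]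
  simp

lemma xTwist_add_single (hQ0 : ∀ k, Q k ≠ 0) (hΓ : ∀ a b, Γ a b * Γ b a = 1) (k l : Fin n)
    (f : Fin n → ℤ) (e : ℤ) :
    xTwist Q Γ k (f + Pi.single l e) =
      xTwist Q Γ k f * if l < k then (Q l * Γ l k) ^ e else 1 := by
  simp only [xTwist]
  rw [prod_zpow_add_single _ _
    fun l' _ => mul_ne_zero (hQ0 l') (left_ne_zero_of_mul_eq_one (hΓ l' k))]
  simp

lemma yTwist_sub_single (hΓ : ∀ a b, Γ a b * Γ b a = 1) (k l : Fin n) (f : Fin n → ℤ) :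
    yTwist Γ k (f - Pi.single l 1) = yTwist Γ k f * if l < k then (Γ k l)⁻¹ else 1 := by
  rw [sub_eq_add_neg, ← Pi.single_neg, yTwist_add_single hΓ, zpow_neg_one]

lemma xTwist_sub_single (hQ0 : ∀ k, Q k ≠ 0) (hΓ : ∀ a b, Γ a b * Γ b a = 1) (k l : Fin n)
    (f : Fin n → ℤ) :
    xTwist Q Γ k (f - Pi.single l 1) =
      xTwist Q Γ k f * if l < k then (Q l * Γ l k)⁻¹ else 1 := by
  rw [sub_eq_add_neg, ← Pi.single_neg, xTwist_add_single hQ0 hΓ, zpow_neg_one]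

lemma filter_lt_eq_filter_val_lt (k : Fin n) :
    univ.filter (· < k) = univ.filter (fun l : Fin n => (l : ℕ) < k) := by
  ext; simp

lemma xTwist_mul_yTwist (hΓ : ∀ a b, Γ a b * Γ b a = 1) (k : Fin n) (f : Fin n → ℤ) :
    xTwist Q Γ k f * yTwist Γ k f = qMonomial Q k f := by
  rw [xTwist, yTwist, ← prod_mul_distrib, qMonomial]
  refine prod_congr (filter_lt_eq_filter_val_lt k) fun l _ => ?_
  rw [← mul_zpow, mul_assoc, hΓ, mul_one]

lemma qMonomial_zero_right (m : ℕ) : qMonomial Q m (0 : Fin n → ℤ) = 1 := by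
  simp [qMonomial]

lemma qMonomial_zero_left (f : Fin n → ℤ) : qMonomial Q 0 f = 1 := by
  simp [qMonomial]

lemma filter_val_lt_succ {m : ℕ} (hm : m < n) :
    univ.filter (fun l : Fin n => (l : ℕ) < m + 1) =
      insert ⟨m, hm⟩ (univ.filter (fun l : Fin n => (l : ℕ) < m)) := by
  ext l
  simp only [mem_filter, mem_univ, true_and, mem_insert, Fin.ext_iff]
  omega

lemma qMonomial_succ {m : ℕ} (hm : m < n) (f : Fin n → ℤ) :
    qMonomial Q (m + 1) f = qMonomial Q m f * Q ⟨m, hm⟩ ^ f ⟨m, hm⟩ := by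
  rw [qMonomial, filter_val_lt_succ hm, prod_insert (by simp), mul_comm, qMonomial]

lemma sub_one_mul_xWeight (hQ1 : ∀ k, Q k ≠ 1) (k : Fin n) (m : ℤ) :
    (Q k - 1) * xWeight Q lam k m = lam (k + 1) * Q k ^ m - lam k :=
  mul_div_cancel₀ _ (sub_ne_zero.mpr (hQ1 k))

lemma xWeight_add_one (hQ0 : ∀ k, Q k ≠ 0) (hQ1 : ∀ k, Q k ≠ 1) (k : Fin n) (m : ℤ) :
    xWeight Q lam k (m + 1) = Q k * xWeight Q lam k m + lam k := by
  apply mul_left_cancel₀ (sub_ne_zero.mpr (hQ1 k))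
  rw [mul_add, mul_left_comm, sub_one_mul_xWeight lam hQ1, sub_one_mul_xWeight lam hQ1,
    zpow_add_one₀ (hQ0 k)]
  ring

lemma sum_sub_one_mul_xWeight (hQ1 : ∀ k, Q k ≠ 1) (f : Fin n → ℤ) {m : ℕ} (hm : m ≤ n) :
    ∑ k ∈ univ.filter (fun k : Fin n => (k : ℕ) < m),
        (Q k - 1) * (xWeight Q lam k (f k) * qMonomial Q k f) =
      lam m * qMonomial Q m f - lam 0 := by
  induction m with
  | zero => simp [qMonomial_zero_left]
  | succ m ih =>
    rw [filter_val_lt_succ hm, sum_insert (by simp), ih (by omega), qMonomial_succ hm,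
      ← mul_assoc, sub_one_mul_xWeight lam hQ1]
    ring

abbrev WeightSpace (K : Type*) [Field K] (n : ℕ) : Type _ := (Fin n → ℤ) →₀ K

variable (Γ) in
def opY (k : Fin n) : Module.End K (WeightSpace K n) :=
  linearCombination K fun f => single (f + Pi.single k 1) (yTwist Γ k f)

variable (Q Γ) in
def opX (k : Fin n) : Module.End K (WeightSpace K n) :=
  linearCombination K fun f =>
    single (f - Pi.single k 1) (xWeight Q lam k (f k) * xTwist Q Γ k f)

lemma opY_single (k : Fin n) (f : Fin n → ℤ) (c : K) :
    opY Γ k (single f c) = single (f + Pi.single k 1) (c * yTwist Γ k f) := by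
  rw [opY, linearCombination_single, smul_single, smul_eq_mul]

lemma opX_single (k : Fin n) (f : Fin n → ℤ) (c : K) :
    opX Q Γ lam k (single f c) =
      single (f - Pi.single k 1) (c * (xWeight Q lam k (f k) * xTwist Q Γ k f)) := by
  rw [opX, linearCombination_single, smul_single, smul_eq_mul]

lemma opY_mul_opY (hΓ : ∀ a b, Γ a b * Γ b a = 1) (hΓd : ∀ a, Γ a a = 1) (i j : Fin n) :
    opY Γ i * opY Γ j = algebraMap K _ (Γ i j) * (opY Γ j * opY Γ i) := by
  refine lhom_ext fun f c => ?_
  simp only [Module.End.mul_apply, Module.algebraMap_end_apply, opY_single, smul_single,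
    smul_eq_mul, yTwist_add_single hΓ, zpow_one, add_right_comm f]
  congr 1
  rcases lt_trichotomy i j with h | rfl | h
  · simp only [h, not_lt_of_gt h, if_true, if_false]
    linear_combination (-(c * yTwist Γ i f * yTwist Γ j f)) * hΓ i j
  · simp [hΓd]
  · simp only [h, not_lt_of_gt h, if_true, if_false]
    ring

lemma opX_mul_opX (hQ0 : ∀ k, Q k ≠ 0) (hΓ : ∀ a b, Γ a b * Γ b a = 1) {i j : Fin n}
    (h : i < j) :
    opX Q Γ lam i * opX Q Γ lam j =
      algebraMap K _ (Q i) * algebraMap K _ (Γ i j) * (opX Q Γ lam j * opX Q Γ lam i) := by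
  refine lhom_ext fun f c => ?_
  simp only [← map_mul, Module.End.mul_apply, Module.algebraMap_end_apply, opX_single,
    smul_single, smul_eq_mul, xTwist_sub_single hQ0 hΓ, sub_right_comm f, Pi.sub_apply,
    Pi.single_eq_of_ne h.ne, Pi.single_eq_of_ne h.ne', sub_zero, h, not_lt_of_gt h,
    if_true, if_false]
  congr 1
  field_simp [hQ0 i, left_ne_zero_of_mul_eq_one (hΓ i j)]

lemma opX_mul_opY_of_lt (hQ0 : ∀ k, Q k ≠ 0) (hΓ : ∀ a b, Γ a b * Γ b a = 1) {i j : Fin n}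
    (h : i < j) :
    opX Q Γ lam i * opY Γ j = algebraMap K _ (Γ j i) * (opY Γ j * opX Q Γ lam i) := by
  refine lhom_ext fun f c => ?_
  simp only [Module.End.mul_apply, Module.algebraMap_end_apply, opX_single, opY_single,
    smul_single, smul_eq_mul, xTwist_add_single hQ0 hΓ, yTwist_sub_single hΓ, sub_add_eq_add_sub,
    Pi.add_apply, Pi.single_eq_of_ne h.ne, add_zero, h, not_lt_of_gt h, if_true, if_false]
  congr 1
  field_simp [left_ne_zero_of_mul_eq_one (hΓ j i)]

lemma opX_mul_opY_of_gt (hQ0 : ∀ k, Q k ≠ 0) (hΓ : ∀ a b, Γ a b * Γ b a = 1) {i j : Fin n}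
    (h : j < i) :
    opX Q Γ lam i * opY Γ j =
      algebraMap K _ (Q j) * algebraMap K _ (Γ j i) * (opY Γ j * opX Q Γ lam i) := by
  refine lhom_ext fun f c => ?_
  simp only [← map_mul, Module.End.mul_apply, Module.algebraMap_end_apply, opX_single,
    opY_single, smul_single, smul_eq_mul, xTwist_add_single hQ0 hΓ, yTwist_sub_single hΓ,
    sub_add_eq_add_sub, Pi.add_apply, Pi.single_eq_of_ne h.ne', add_zero, h, not_lt_of_gt h,
    if_true, if_false, zpow_one]
  congr 1
  ring

lemma opY_opX_single (hΓ : ∀ a b, Γ a b * Γ b a = 1) (k : Fin n) (f : Fin n → ℤ) (c : K) :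
    opY Γ k (opX Q Γ lam k (single f c)) =
      single f (c * (xWeight Q lam k (f k) * qMonomial Q k f)) := by
  rw [opX_single, opY_single, sub_add_cancel, yTwist_sub_single hΓ, if_neg (lt_irrefl k),
    mul_one, ← xTwist_mul_yTwist hΓ]
  congr 1
  ring

lemma opX_opY_single (hQ0 : ∀ k, Q k ≠ 0) (hQ1 : ∀ k, Q k ≠ 1)
    (hΓ : ∀ a b, Γ a b * Γ b a = 1) (k : Fin n) (f : Fin n → ℤ) (c : K) :
    opX Q Γ lam k (opY Γ k (single f c)) =
      single f (c * ((Q k * xWeight Q lam k (f k) + lam k) * qMonomial Q k f)) := by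
  rw [opY_single, opX_single, add_sub_cancel_right, Pi.add_apply, Pi.single_eq_same,
    xTwist_add_single hQ0 hΓ, if_neg (lt_irrefl k), mul_one, xWeight_add_one lam hQ0 hQ1,
    ← xTwist_mul_yTwist hΓ]
  congr 1
  ring

lemma sum_opY_mul_opX_single (hQ1 : ∀ k, Q k ≠ 1) (hΓ : ∀ a b, Γ a b * Γ b a = 1) {m : ℕ}
    (hm : m ≤ n) (f : Fin n → ℤ) (c : K) :
    (∑ k ∈ univ.filter (fun k : Fin n => (k : ℕ) < m),
        algebraMap K _ (Q k - 1) * (opY Γ k * opX Q Γ lam k)) (single f c) =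
      single f (c * (lam m * qMonomial Q m f - lam 0)) := by
  simp only [LinearMap.sum_apply, Module.End.mul_apply, Module.algebraMap_end_apply,
    opY_opX_single lam hΓ, smul_single, smul_eq_mul, ← single_finsetSum]
  rw [← sum_sub_one_mul_xWeight lam hQ1 f hm, Finset.mul_sum]
  exact congrArg _ (sum_congr rfl fun k _ => by ring)

lemma opX_mul_opY_self (hQ0 : ∀ k, Q k ≠ 0) (hQ1 : ∀ k, Q k ≠ 1)
    (hΓ : ∀ a b, Γ a b * Γ b a = 1) (hlam0 : lam 0 = 1) (j : Fin n) :
    opX Q Γ lam j * opY Γ j =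
      algebraMap K _ (Q j) * (opY Γ j * opX Q Γ lam j) + 1 +
        ∑ k ∈ univ.filter (fun k : Fin n => k < j),
          algebraMap K _ (Q k - 1) * (opY Γ k * opX Q Γ lam k) := by
  refine lhom_ext fun f c => ?_
  rw [LinearMap.add_apply, LinearMap.add_apply, filter_lt_eq_filter_val_lt,
    sum_opY_mul_opX_single lam hQ1 hΓ j.isLt.le, hlam0]
  simp only [Module.End.mul_apply, Module.algebraMap_end_apply, Module.End.one_apply,
    opY_opX_single lam hΓ, opX_opY_single lam hQ0 hQ1 hΓ, smul_single, smul_eq_mul,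
    ← single_add]
  congr 1
  ring

variable (Q Γ) in
def rep (hQ0 : ∀ k, Q k ≠ 0) (hQ1 : ∀ k, Q k ≠ 1) (hΓ : ∀ a b, Γ a b * Γ b a = 1)
    (hΓd : ∀ a, Γ a a = 1) (hlam0 : lam 0 = 1) :
    MQWeyl K n Q Γ →ₐ[K] Module.End K (WeightSpace K n) :=
  RingQuot.liftAlgHom K ⟨FreeAlgebra.lift K (Sum.elim (opX Q Γ lam) (opY Γ)), fun _ _ h => by
    induction h
    all_goals
      simp only [freeX, freeY, map_mul, map_add, map_sum, map_one, AlgHom.commutes,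
        FreeAlgebra.lift_ι_apply, Sum.elim_inl, Sum.elim_inr]
    exacts [opY_mul_opY hΓ hΓd _ _, opX_mul_opX lam hQ0 hΓ ‹_›,
      opX_mul_opY_of_lt lam hQ0 hΓ ‹_›, opX_mul_opY_of_gt lam hQ0 hΓ ‹_›,
      opX_mul_opY_self lam hQ0 hQ1 hΓ hlam0 _]⟩

variable {lam} {hQ0 : ∀ k, Q k ≠ 0} {hQ1 : ∀ k, Q k ≠ 1} {hΓ : ∀ a b, Γ a b * Γ b a = 1}
  {hΓd : ∀ a, Γ a a = 1} {hlam0 : lam 0 = 1}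

lemma rep_x (k : Fin n) : rep Q Γ lam hQ0 hQ1 hΓ hΓd hlam0 (x K n Q Γ k) = opX Q Γ lam k := by
  rw [x, rep, RingQuot.liftAlgHom_mkAlgHom_apply, freeX, FreeAlgebra.lift_ι_apply, Sum.elim_inl]

lemma rep_y (k : Fin n) : rep Q Γ lam hQ0 hQ1 hΓ hΓd hlam0 (y K n Q Γ k) = opY Γ k := by
  rw [y, rep, RingQuot.liftAlgHom_mkAlgHom_apply, freeY, FreeAlgebra.lift_ι_apply, Sum.elim_inr]

lemma rep_z_single {m : ℕ} (hm : m ≤ n) (f : Fin n → ℤ) (c : K) :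
    rep Q Γ lam hQ0 hQ1 hΓ hΓd hlam0 (z K n Q Γ m) (single f c) =
      single f (c * (lam m * qMonomial Q m f)) := by
  simp only [z, map_add, map_one, map_sum, map_mul, AlgHom.commutes, rep_x, rep_y,
    LinearMap.add_apply, Module.End.one_apply, sum_opY_mul_opX_single lam hQ1 hΓ hm, hlam0,
    ← single_add]
  congr 1
  ring

end MQW.WeightRep

/-- for `i ≠ j`, the two-sided ideal `(z_j)` is not contained in `(z_i)`
(the parameters `q_i` being non-roots of unity, as in the setting of the paper). -/
theorem mqw_z_ideals_incomparable (K : Type*) [Field K] (n : ℕ) (Q : Fin n → K)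
    (Γ : Fin n → Fin n → K) (hQ : ∀ i, Q i ≠ 0)
    (hq : ∀ (i : Fin n) (k : ℕ), k ≠ 0 → Q i ^ k ≠ 1)
    (hΓ : ∀ i j, Γ i j * Γ j i = 1) (hΓd : ∀ i, Γ i i = 1)
    (i j : Fin n) (hij : i ≠ j) :
    ¬ (TwoSidedIdeal.span {MQW.z K n Q Γ ((j : ℕ) + 1)} ≤
        TwoSidedIdeal.span {MQW.z K n Q Γ ((i : ℕ) + 1)}) := by
  have hQ1 : ∀ k, Q k ≠ 1 := fun k => by simpa using hq k 1 one_ne_zero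
  let lam : ℕ → K := fun m => if m = i + 1 then 0 else 1
  have hlamj : lam (j + 1) = 1 := if_neg fun h => hij (Fin.ext (by omega)).symm
  let φ := MQW.WeightRep.rep Q Γ lam hQ hQ1 hΓ hΓd (by simp [lam])
  have hzi : φ (MQW.z K n Q Γ (i + 1)) = 0 :=
    Finsupp.lhom_ext fun f c => by simp [φ, MQW.WeightRep.rep_z_single i.isLt, lam]
  have hzj : φ (MQW.z K n Q Γ (j + 1)) ≠ 0 := fun h => by
    simpa [φ, MQW.WeightRep.rep_z_single j.isLt, MQW.WeightRep.qMonomial_zero_right, hlamj]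
      using LinearMap.congr_fun h (Finsupp.single 0 1)
  exact TwoSidedIdeal.span_singleton_not_le_of_map_eq_zero φ hzi hzj
end
end

section
/- Let q, q' ∈ K* with q not a root of unity. The quantized Weyl algebras A_1^q(K) and A_1^{q'}(K) are isomorphic as K-algebras if and only if q' = q or q' = q^{-1}. -/
/-!  Multiparameter quantized Weyl algebras (Maltsiniotis).
Generators: `Sum.inl i ↦ xᵢ`, `Sum.inr i ↦ yᵢ`. -/

noncomputable section

open scoped BigOperators

/-! If `u` is not a root of unity, `A_1^u` embeds into the quantum torus: on `K[ℤ]` let `S` be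
the shift `e_n ↦ e_{n+1}` and `D` the diagonal operator `e_n ↦ u^n e_n`, so that `D S = u S D`;
then `x ↦ (u - 1)⁻¹ S⁻¹ (D - 1)`, `y ↦ S` is a faithful representation whose image lies in the
span of the `S^d D^k`, which are linearly independent. Comparing lex-leading coefficients in
this twisted group algebra of `ℤ²` shows that `a b = c b a` with `a, b ≠ 0` forces `c ∈ u^ℤ`, and
comparing constant coefficients shows that `a b - b a ≠ 1`.

In any `A_1^v` the elements `x` and `z = x y - y x` are nonzero (they act nontrivially on
`K[t]` through the `v`-derivative) and satisfy `x z = v z x`. Hence `A_1^u ≃ A_1^v` forces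
`v = u^k`, with `k ≠ 0` because for `v = 1` we would get `z = 1`; by symmetry `u = v^j`, so `u` and
`v` generate the same cyclic group and `v = u^{±1}`. Conversely `x ↦ y`, `y ↦ -u⁻¹ x` is an
isomorphism `A_1^u ≃ A_1^{u⁻¹}`. -/

theorem Units.val_ne_one_of_not_isOfFinOrder {M : Type*} [Monoid M] {u : Mˣ}
    (hu : ¬IsOfFinOrder u) : (u : M) ≠ 1 := fun h =>
  hu (Units.val_eq_one.1 h ▸ IsOfFinOrder.one)

theorem IsOfFinOrder.of_zpow {G : Type*} [Group G] {x : G} {k : ℤ} (h : IsOfFinOrder (x ^ k))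
    (hk : k ≠ 0) : IsOfFinOrder x := by
  obtain ⟨n, hn, hxn⟩ := isOfFinOrder_iff_zpow_eq_one.1 h
  exact isOfFinOrder_iff_zpow_eq_one.2 ⟨k * n, mul_ne_zero hk hn, by rwa [zpow_mul]⟩

abbrev QuantumWeyl (K : Type*) [CommRing K] (p : K) : Type _ :=
  MQWeyl K 1 (fun _ => p) (fun _ _ => 1)

namespace QuantumWeyl

section CommRing

variable {K : Type*} [CommRing K] (p : K)

def x : QuantumWeyl K p := MQW.x K 1 _ _ 0

def y : QuantumWeyl K p := MQW.y K 1 _ _ 0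

theorem x_mul_y : x p * y p = p • (y p * x p) + 1 := by
  have h := RingQuot.mkAlgHom_rel K (MQW.rel.weyl (K := K) (n := 1) (Q := fun _ => p)
    (Γ := fun _ _ => 1) 0)
  simpa [x, y, MQW.x, MQW.y, ← Algebra.smul_def] using h

theorem x_mul_y_sub_y_mul_x : x p * y p - y p * x p = (p - 1) • (y p * x p) + 1 := by
  rw [x_mul_y]
  module

theorem x_mul_commutator :
    x p * (x p * y p - y p * x p) = p • ((x p * y p - y p * x p) * x p) := by
  have hxyx : x p * (y p * x p) = p • (y p * x p * x p) + x p := by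
    rw [← mul_assoc, x_mul_y, add_mul, one_mul, smul_mul_assoc]
  rw [x_mul_y_sub_y_mul_x, mul_add, mul_one, mul_smul_comm, hxyx, add_mul, one_mul,
    smul_mul_assoc]
  module

variable {p} {B : Type*} [Semiring B] [Algebra K B]

def lift {X Y : B} (h : X * Y = p • (Y * X) + 1) : QuantumWeyl K p →ₐ[K] B :=
  RingQuot.liftAlgHom K ⟨FreeAlgebra.lift K (Sum.elim (fun _ => X) (fun _ => Y)), by
    intro a b hab
    induction hab with
    | yy => simp [MQW.freeY]
    | xx i j h => exact (h.ne (Subsingleton.elim i j)).elim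
    | xyLT i j h => exact (h.ne (Subsingleton.elim i j)).elim
    | xyGT i j h => exact (h.ne (Subsingleton.elim j i)).elim
    | weyl j =>
      obtain rfl := Subsingleton.elim j 0
      simpa [MQW.freeX, MQW.freeY, ← Algebra.smul_def] using h⟩

@[simp]
theorem lift_x {X Y : B} (h : X * Y = p • (Y * X) + 1) : lift h (x p) = X := by
  simp [lift, x, MQW.x, MQW.freeX]

@[simp]
theorem lift_y {X Y : B} (h : X * Y = p • (Y * X) + 1) : lift h (y p) = Y := by
  simp [lift, y, MQW.y, MQW.freeY]

variable (p) in
theorem adjoin_x_y : Algebra.adjoin K {x p, y p} = ⊤ := by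
  rw [eq_top_iff]
  rintro a -
  obtain ⟨w, rfl⟩ := RingQuot.mkAlgHom_surjective K _ a
  induction w using FreeAlgebra.induction with
  | grade0 r => rw [AlgHom.commutes]; exact Subalgebra.algebraMap_mem _ r
  | grade1 s =>
    apply Algebra.subset_adjoin
    rcases s with i | i <;> obtain rfl := Subsingleton.elim i 0
    exacts [Or.inl rfl, Or.inr rfl]
  | mul w₁ w₂ h₁ h₂ => rw [map_mul]; exact Subalgebra.mul_mem _ h₁ h₂
  | add w₁ w₂ h₁ h₂ => rw [map_add]; exact Subalgebra.add_mem _ h₁ h₂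

theorem algHom_ext {f g : QuantumWeyl K p →ₐ[K] B} (hx : f (x p) = g (x p))
    (hy : f (y p) = g (y p)) : f = g :=
  AlgHom.ext_of_adjoin_eq_top (adjoin_x_y p) (by simp [Set.EqOn, hx, hy])

theorem range_le_of_mem (f : QuantumWeyl K p →ₐ[K] B) {S : Subalgebra K B}
    (hx : f (x p) ∈ S) (hy : f (y p) ∈ S) : f.range ≤ S := by
  rw [← Algebra.map_top, ← adjoin_x_y, AlgHom.map_adjoin, Set.image_pair,
    Algebra.adjoin_le_iff, Set.pair_subset_iff]
  exact ⟨hx, hy⟩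

variable (p) in
theorem span_monomials :
    Submodule.span K (Set.range fun ab : ℕ × ℕ => y p ^ ab.1 * x p ^ ab.2) = ⊤ := by
  set M := Submodule.span K (Set.range fun ab : ℕ × ℕ => y p ^ ab.1 * x p ^ ab.2) with hM
  have monomial_mem (a b : ℕ) : y p ^ a * x p ^ b ∈ M := Submodule.subset_span ⟨(a, b), rfl⟩
  have mul_mem_of_monomial {g : QuantumWeyl K p}
      (hg : ∀ a b : ℕ, g * (y p ^ a * x p ^ b) ∈ M) : ∀ t ∈ M, g * t ∈ M := by
    refine fun t ht => (?_ : M ≤ M.comap (LinearMap.mulLeft K g)) ht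
    rw [hM, Submodule.span_le]
    rintro _ ⟨ab, rfl⟩
    exact hg ab.1 ab.2
  have y_mul_mem : ∀ t ∈ M, y p * t ∈ M :=
    mul_mem_of_monomial fun a b => by rw [← mul_assoc, ← pow_succ']; exact monomial_mem _ _
  have x_mul_monomial_mem (a b : ℕ) : x p * (y p ^ a * x p ^ b) ∈ M := by
    induction a with
    | zero => simpa [← pow_succ'] using monomial_mem 0 (b + 1)
    | succ a ih =>
      rw [pow_succ', mul_assoc, ← mul_assoc, x_mul_y, add_mul, one_mul, smul_mul_assoc,
        mul_assoc]
      exact M.add_mem (M.smul_mem _ (y_mul_mem _ ih)) (monomial_mem a b)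
  have mul_mem (a : QuantumWeyl K p) : ∀ t ∈ M, a * t ∈ M := by
    have ha : a ∈ Algebra.adjoin K {x p, y p} := by rw [adjoin_x_y]; trivial
    induction ha using Algebra.adjoin_induction with
    | mem g hg =>
      rcases hg with rfl | rfl
      exacts [mul_mem_of_monomial x_mul_monomial_mem, y_mul_mem]
    | algebraMap r => intro t ht; rw [← Algebra.smul_def]; exact M.smul_mem r ht
    | add a b _ _ ha hb => intro t ht; rw [add_mul]; exact M.add_mem (ha t ht) (hb t ht)
    | mul a b _ _ ha hb => intro t ht; rw [mul_assoc]; exact ha _ (hb t ht)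
  rw [eq_top_iff]
  rintro a -
  simpa using mul_mem a _ (monomial_mem 0 0)

-- `n - 1` truncates at `n = 0`, where the weight `∑ i < 0, p ^ i` vanishes anyway.
variable (p) in
def qDeriv : Module.End K (ℕ →₀ K) :=
  Finsupp.linearCombination K fun n => Finsupp.single (n - 1) (∑ i ∈ Finset.range n, p ^ i)

theorem qDeriv_single (n : ℕ) (c : K) :
    qDeriv p (Finsupp.single n c) =
      Finsupp.single (n - 1) (c * ∑ i ∈ Finset.range n, p ^ i) := by
  simp [qDeriv, Finsupp.smul_single]

theorem shift_qDeriv_single (n : ℕ) (c : K) :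
    Finsupp.lmapDomain K K Nat.succ (qDeriv p (Finsupp.single n c)) =
      Finsupp.single n (c * ∑ i ∈ Finset.range n, p ^ i) := by
  cases n with
  | zero => rw [qDeriv_single, Finset.sum_range_zero, mul_zero, Finsupp.single_zero, map_zero]
  | succ n => rw [qDeriv_single, Nat.add_sub_cancel, Finsupp.lmapDomain_apply,
      Finsupp.mapDomain_single]

theorem qDeriv_mul_shift :
    qDeriv p * Finsupp.lmapDomain K K Nat.succ =
      p • (Finsupp.lmapDomain K K Nat.succ * qDeriv p) + 1 := by
  refine Finsupp.lhom_ext fun n c => ?_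
  rw [Module.End.mul_apply, LinearMap.add_apply, LinearMap.smul_apply, Module.End.mul_apply,
    Module.End.one_apply, shift_qDeriv_single, Finsupp.lmapDomain_apply,
    Finsupp.mapDomain_single, qDeriv_single, Nat.succ_sub_one, geom_sum_succ,
    Finsupp.smul_single, ← Finsupp.single_add]
  congr 1
  ring

-- `n - 1` truncates at `n = 0`, where the weight `∑ i < 0, p ^ i` vanishes anyway.
variable (p) in
def qDerivRep : QuantumWeyl K p →ₐ[K] Module.End K (ℕ →₀ K) :=
  lift (qDeriv_mul_shift (p := p))

variable (p) [Nontrivial K]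

theorem x_ne_zero : x p ≠ 0 := by
  intro h
  have := DFunLike.congr_fun (congrArg (qDerivRep p) h) (Finsupp.single 1 1)
  simp [qDerivRep, qDeriv_single] at this

theorem x_mul_y_sub_y_mul_x_ne_zero : x p * y p - y p * x p ≠ 0 := by
  intro h
  have := DFunLike.congr_fun (congrArg (qDerivRep p) h) (Finsupp.single 0 1)
  simp [x_mul_y_sub_y_mul_x, qDerivRep, qDeriv_single] at this

end CommRing

section Field

variable {K : Type*} [Field K] {p : K}

theorem swap_rel (hp : p ≠ 0) :
    y p⁻¹ * ((-p⁻¹) • x p⁻¹) = p • ((-p⁻¹) • x p⁻¹ * y p⁻¹) + 1 := by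
  rw [mul_smul_comm, smul_mul_assoc, smul_smul, mul_neg, mul_inv_cancel₀ hp, x_mul_y]
  module

theorem swap_inv_rel (hp : p ≠ 0) :
    (-p) • y p * x p = p⁻¹ • (x p * ((-p) • y p)) + 1 := by
  rw [mul_smul_comm, smul_mul_assoc, smul_smul, mul_neg, inv_mul_cancel₀ hp, x_mul_y]
  module

def swapEquiv (hp : p ≠ 0) : QuantumWeyl K p ≃ₐ[K] QuantumWeyl K p⁻¹ :=
  AlgEquiv.ofAlgHom (lift (swap_rel hp)) (lift (swap_inv_rel hp))
    (algHom_ext (by simp [smul_smul, hp]) (by simp))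
    (algHom_ext (by simp) (by simp [smul_smul, hp]))

end Field

end QuantumWeyl

namespace QuantumTorus

variable {K : Type*} [Field K] (u : Kˣ)

-- `monomial u d k` is the operator `S ^ d * D ^ k` of the header.
def monomial (d k : ℤ) : Module.End K (ℤ →₀ K) :=
  Finsupp.linearCombination K fun n => Finsupp.single (n + d) ((u : K) ^ (n * k))

@[simp]
theorem monomial_single (d k n : ℤ) (c : K) :
    monomial u d k (Finsupp.single n c) = Finsupp.single (n + d) (c * (u : K) ^ (n * k)) := by
  simp [monomial, Finsupp.smul_single]

theorem monomial_zero_zero : monomial u 0 0 = 1 :=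
  Finsupp.lhom_ext fun n c => by simp

theorem monomial_mul_monomial (d k d' k' : ℤ) :
    monomial u d k * monomial u d' k' = (u : K) ^ (d' * k) • monomial u (d + d') (k + k') := by
  refine Finsupp.lhom_ext fun n c => ?_
  simp only [Module.End.mul_apply, LinearMap.smul_apply, monomial_single, Finsupp.smul_single,
    smul_eq_mul]
  rw [add_assoc, add_comm d']
  congr 1
  rw [add_mul, mul_add, zpow_add₀ u.ne_zero, zpow_add₀ u.ne_zero]
  ring

def toEnd : ((ℤ × ℤ) →₀ K) →ₗ[K] Module.End K (ℤ →₀ K) :=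
  Finsupp.linearCombination K fun m => monomial u m.1 m.2

@[simp]
theorem toEnd_single (m : ℤ × ℤ) (c : K) :
    toEnd u (Finsupp.single m c) = c • monomial u m.1 m.2 := by
  simp [toEnd]

def twistedMul : ((ℤ × ℤ) →₀ K) →ₗ[K] ((ℤ × ℤ) →₀ K) →ₗ[K] ((ℤ × ℤ) →₀ K) :=
  Finsupp.lift _ K _ fun m => Finsupp.lift _ K _ fun n =>
    Finsupp.single (m + n) ((u : K) ^ (n.1 * m.2))

@[simp]
theorem twistedMul_single_single (m n : ℤ × ℤ) (s t : K) :
    twistedMul u (Finsupp.single m s) (Finsupp.single n t) =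
      Finsupp.single (m + n) (s * t * (u : K) ^ (n.1 * m.2)) := by
  simp [twistedMul, Finsupp.smul_single, mul_assoc, -Finsupp.single_mul]

theorem toEnd_mul (F G : (ℤ × ℤ) →₀ K) :
    toEnd u F * toEnd u G = toEnd u (twistedMul u F G) := by
  induction F using Finsupp.induction_linear with
  | zero => simp
  | add F₁ F₂ h₁ h₂ => simp only [map_add, add_mul, h₁, h₂, LinearMap.add_apply]
  | single m s =>
    induction G using Finsupp.induction_linear with
    | zero => simp
    | add G₁ G₂ h₁ h₂ => simp only [map_add, mul_add, h₁, h₂]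
    | single n t =>
      simp only [toEnd_single, twistedMul_single_single, smul_mul_smul_comm,
        monomial_mul_monomial, smul_smul, Prod.fst_add, Prod.snd_add]

theorem toEnd_single_zero_one : toEnd u (Finsupp.single 0 1) = 1 := by
  simp [← monomial_zero_zero u]

def subalgebra : Subalgebra K (Module.End K (ℤ →₀ K)) :=
  (LinearMap.range (toEnd u)).toSubalgebra ⟨_, toEnd_single_zero_one u⟩
    (by rintro _ _ ⟨F, rfl⟩ ⟨G, rfl⟩; exact ⟨_, (toEnd_mul u F G).symm⟩)

theorem monomial_mem_subalgebra (d k : ℤ) : monomial u d k ∈ subalgebra u :=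
  ⟨Finsupp.single (d, k) 1, by simp⟩

theorem linearIndependent_zpow_mul (hu : ¬IsOfFinOrder u) :
    LinearIndependent K fun k n : ℤ => (u : K) ^ (n * k) := by
  let χ (k : ℤ) : Multiplicative ℤ →* K := (Units.coeHom K).comp (zpowersHom Kˣ (u ^ k))
  have hχ : Function.Injective χ := fun k k' h => by
    have := DFunLike.congr_fun h (Multiplicative.ofAdd 1)
    exact injective_zpow_iff_not_isOfFinOrder.2 hu (Units.ext (by simpa [χ] using this))
  convert ((linearIndependent_monoidHom (Multiplicative ℤ) K).comp χ hχ).map'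
    (LinearEquiv.funCongrLeft K K Multiplicative.ofAdd).toLinearMap (LinearEquiv.ker _) using 1
  · ext k n
    simp [χ, LinearEquiv.funCongrLeft_apply, ← zpow_mul, mul_comm]
  all_goals rfl

theorem toEnd_single_one_apply_add (F : (ℤ × ℤ) →₀ K) (n d : ℤ) :
    toEnd u F (Finsupp.single n 1) (n + d) =
      Finsupp.linearCombination K (fun k n : ℤ => (u : K) ^ (n * k)) (F.curry d) n := by
  induction F using Finsupp.induction_linear with
  | zero => simp [← Finsupp.coe_curryAddEquiv]
  | add F G hF hG => simp [← Finsupp.coe_curryAddEquiv, hF, hG]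
  | single m c =>
    rcases eq_or_ne m.1 d with h | h <;> simp [Finsupp.curry_single, h]

theorem toEnd_injective (hu : ¬IsOfFinOrder u) : Function.Injective (toEnd u) := by
  refine (injective_iff_map_eq_zero _).2 fun F hF => ?_
  ext ⟨d, k⟩
  have hslice : Finsupp.linearCombination K (fun k n : ℤ => (u : K) ^ (n * k)) (F.curry d) = 0 :=
    funext fun n => by simp [← toEnd_single_one_apply_add, hF]
  simpa using
    DFunLike.congr_fun (linearIndependent_iff.1 (linearIndependent_zpow_mul u hu) _ hslice) k

theorem twistedMul_apply (F G : (ℤ × ℤ) →₀ K) (p : ℤ × ℤ) :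
    twistedMul u F G p = ∑ m ∈ F.support, ∑ n ∈ G.support,
      if m + n = p then F m * G n * (u : K) ^ (n.1 * m.2) else 0 := by
  simp [twistedMul, Finsupp.lift_apply, Finsupp.sum, Finsupp.finsetSum_apply,
    Finsupp.single_apply, Finset.mul_sum, mul_assoc, ← ite_and]

theorem twistedMul_apply_add_of_le {F G : (ℤ × ℤ) →₀ K} {m₀ n₀ : ℤ × ℤ}
    (hF : ∀ m ∈ F.support, toLex m ≤ toLex m₀) (hG : ∀ n ∈ G.support, toLex n ≤ toLex n₀) :
    twistedMul u F G (m₀ + n₀) = F m₀ * G n₀ * (u : K) ^ (n₀.1 * m₀.2) := by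
  have top {m n} (hm : m ∈ F.support) (hn : n ∈ G.support) (h : m + n = m₀ + n₀) :
      m = m₀ ∧ n = n₀ :=
    (add_eq_add_iff_eq_and_eq (hF m hm) (hG n hn)).1 (congrArg toLex h)
  rw [twistedMul_apply, Finset.sum_eq_single m₀, Finset.sum_eq_single n₀, if_pos rfl]
  · exact fun n _ hne => if_neg fun h => hne (add_left_cancel h)
  · intro hn
    simp [Finsupp.notMem_support_iff.1 hn]
  · exact fun m hm hne => Finset.sum_eq_zero fun n hn => if_neg fun h => hne (top hm hn h).1
  · intro hm
    simp [Finsupp.notMem_support_iff.1 hm]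

theorem twistedMul_apply_zero_comm (F G : (ℤ × ℤ) →₀ K) :
    twistedMul u F G 0 = twistedMul u G F 0 := by
  induction F using Finsupp.induction_linear with
  | zero => simp
  | add F₁ F₂ h₁ h₂ => simp [h₁, h₂]
  | single m s =>
    induction G using Finsupp.induction_linear with
    | zero => simp
    | add G₁ G₂ h₁ h₂ => simp [h₁, h₂]
    | single n t =>
      simp only [twistedMul_single_single, Finsupp.single_apply, add_comm n]
      split_ifs with h
      · obtain rfl := eq_neg_of_add_eq_zero_right h
        simp only [Prod.fst_neg, Prod.snd_neg, neg_mul, mul_neg]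
        ring
      · rfl

theorem exists_zpow_of_twistedMul_eq_smul {F G : (ℤ × ℤ) →₀ K} (hF : F ≠ 0) (hG : G ≠ 0)
    {c : K} (h : twistedMul u F G = c • twistedMul u G F) : ∃ k : ℤ, c = (u : K) ^ k := by
  obtain ⟨m₀, hm₀, hF_le⟩ :=
    F.support.exists_max_image toLex (Finsupp.support_nonempty_iff.2 hF)
  obtain ⟨n₀, hn₀, hG_le⟩ :=
    G.support.exists_max_image toLex (Finsupp.support_nonempty_iff.2 hG)
  have h₀ := DFunLike.congr_fun h (m₀ + n₀)
  rw [Finsupp.smul_apply, twistedMul_apply_add_of_le u hF_le hG_le, add_comm,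
    twistedMul_apply_add_of_le u hG_le hF_le, smul_eq_mul] at h₀
  refine ⟨n₀.1 * m₀.2 - m₀.1 * n₀.2, ?_⟩
  have hFG : F m₀ * G n₀ ≠ 0 :=
    mul_ne_zero (Finsupp.mem_support_iff.1 hm₀) (Finsupp.mem_support_iff.1 hn₀)
  rw [zpow_sub₀ u.ne_zero, eq_div_iff (zpow_ne_zero _ u.ne_zero)]
  exact mul_left_cancel₀ hFG (by linear_combination -h₀)

theorem twistedMul_sub_twistedMul_ne_single (F G : (ℤ × ℤ) →₀ K) :
    twistedMul u F G - twistedMul u G F ≠ Finsupp.single 0 1 := by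
  intro h
  simpa [twistedMul_apply_zero_comm] using DFunLike.congr_fun h 0

variable {u}

theorem exists_zpow_of_mul_eq_smul_mul (hu : ¬IsOfFinOrder u) {S T : Module.End K (ℤ →₀ K)}
    (hS : S ∈ subalgebra u) (hT : T ∈ subalgebra u) (hS₀ : S ≠ 0) (hT₀ : T ≠ 0) {c : K}
    (h : S * T = c • (T * S)) : ∃ k : ℤ, c = (u : K) ^ k := by
  obtain ⟨F, rfl⟩ := hS
  obtain ⟨G, rfl⟩ := hT
  refine exists_zpow_of_twistedMul_eq_smul u (F := F) (G := G)
    (fun hF => hS₀ (by rw [hF, map_zero])) (fun hG => hT₀ (by rw [hG, map_zero]))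
    (toEnd_injective u hu ?_)
  rw [map_smul, ← toEnd_mul, ← toEnd_mul, h]

theorem mul_sub_mul_ne_one (hu : ¬IsOfFinOrder u) {S T : Module.End K (ℤ →₀ K)}
    (hS : S ∈ subalgebra u) (hT : T ∈ subalgebra u) : S * T - T * S ≠ 1 := by
  obtain ⟨F, rfl⟩ := hS
  obtain ⟨G, rfl⟩ := hT
  have := (toEnd_injective u hu).ne (twistedMul_sub_twistedMul_ne_single u F G)
  rwa [map_sub, toEnd_single_zero_one, ← toEnd_mul, ← toEnd_mul] at this

end QuantumTorus

namespace QuantumWeyl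

open QuantumTorus

variable {K : Type*} [Field K] {u : Kˣ}

variable (u) in
def torusX : Module.End K (ℤ →₀ K) :=
  ((u : K) - 1)⁻¹ • (monomial u (-1) 1 - monomial u (-1) 0)

theorem torusX_single (n : ℤ) (c : K) :
    torusX u (Finsupp.single n c) =
      Finsupp.single (n - 1) (((u : K) ^ n - 1) / ((u : K) - 1) * c) := by
  simp only [torusX, LinearMap.smul_apply, LinearMap.sub_apply, monomial_single, mul_one,
    mul_zero, zpow_zero, ← Finsupp.single_sub, Finsupp.smul_single, smul_eq_mul, ← sub_eq_add_neg]
  congr 1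
  ring

theorem torusX_mul_monomial (hu : (u : K) ≠ 1) :
    torusX u * monomial u 1 0 = (u : K) • (monomial u 1 0 * torusX u) + 1 := by
  have hu' : (u : K) - 1 ≠ 0 := sub_ne_zero.2 hu
  refine Finsupp.lhom_ext fun n c => ?_
  simp only [Module.End.mul_apply, LinearMap.add_apply, LinearMap.smul_apply,
    Module.End.one_apply, monomial_single, torusX_single, Finsupp.smul_single, smul_eq_mul,
    ← Finsupp.single_add, mul_zero, zpow_zero, mul_one, add_sub_cancel_right, sub_add_cancel]
  congr 1
  rw [zpow_add_one₀ u.ne_zero]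
  field_simp
  ring

variable (u) in
def toTorus (hu : (u : K) ≠ 1) : QuantumWeyl K u →ₐ[K] Module.End K (ℤ →₀ K) :=
  lift (torusX_mul_monomial hu)

theorem torusX_mem_subalgebra : torusX u ∈ subalgebra u := by
  refine ⟨((u : K) - 1)⁻¹ • (Finsupp.single (-1, 1) 1 - Finsupp.single (-1, 0) 1), ?_⟩
  simp [torusX]

theorem range_toTorus_le (hu : (u : K) ≠ 1) : (toTorus u hu).range ≤ subalgebra u :=
  range_le_of_mem _ (by simpa [toTorus] using torusX_mem_subalgebra)
    (by simpa [toTorus] using monomial_mem_subalgebra u 1 0)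

variable (u) in
def qFactorial (N : ℕ) : K := ∏ i ∈ Finset.range N, ((u : K) ^ (i + 1) - 1) / ((u : K) - 1)

theorem torusX_pow_single_natCast (N : ℕ) (c : K) :
    (torusX u ^ N) (Finsupp.single (N : ℤ) c) = Finsupp.single 0 (qFactorial u N * c) := by
  induction N generalizing c with
  | zero => simp [qFactorial]
  | succ N ih =>
    rw [pow_succ, Module.End.mul_apply, torusX_single, Nat.cast_succ, add_sub_cancel_right, ih,
      qFactorial, qFactorial, Finset.prod_range_succ, zpow_add_one₀ u.ne_zero, zpow_natCast,
      pow_succ]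
    ring_nf

theorem torusX_pow_single_natCast_of_lt {N b : ℕ} (h : N < b) (c : K) :
    (torusX u ^ b) (Finsupp.single (N : ℤ) c) = 0 := by
  obtain ⟨j, rfl⟩ := Nat.exists_eq_add_of_lt h
  rw [show N + j + 1 = j + 1 + N by ring, pow_add, Module.End.mul_apply,
    torusX_pow_single_natCast, pow_succ, Module.End.mul_apply, torusX_single]
  simp

theorem qFactorial_ne_zero (hu : ¬IsOfFinOrder u) (N : ℕ) : qFactorial u N ≠ 0 := by
  have hpow (n : ℕ) (hn : n ≠ 0) : (u : K) ^ n - 1 ≠ 0 := by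
    refine sub_ne_zero.2 fun h => hu (isOfFinOrder_iff_pow_eq_one.2 ⟨n, Nat.pos_of_ne_zero hn, ?_⟩)
    exact Units.ext (by simpa using h)
  exact Finset.prod_ne_zero_iff.2 fun i _ =>
    div_ne_zero (hpow _ i.succ_ne_zero) (by simpa using hpow 1 one_ne_zero)

theorem toTorus_monomial_single_natCast (hu : (u : K) ≠ 1) {a b N : ℕ} (hN : N ≤ b) :
    toTorus u hu (y (u : K) ^ a * x (u : K) ^ b) (Finsupp.single (N : ℤ) 1) =
      if b = N then Finsupp.single (a : ℤ) (qFactorial u N) else 0 := by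
  have hy : monomial u 1 0 ^ a = monomial u a 0 := by
    induction a with
    | zero => simp [monomial_zero_zero]
    | succ a ih => simp [pow_succ, ih, monomial_mul_monomial]
  simp only [map_mul, map_pow, toTorus, lift_x, lift_y, hy, Module.End.mul_apply]
  split_ifs with hb
  · subst hb
    simp [torusX_pow_single_natCast]
  · rw [torusX_pow_single_natCast_of_lt (lt_of_le_of_ne hN (Ne.symm hb)), map_zero]

theorem toTorus_injective (hu : ¬IsOfFinOrder u) (hu₁ : (u : K) ≠ 1) :
    Function.Injective (toTorus u hu₁) := by
  refine (injective_iff_map_eq_zero _).2 fun a ha => ?_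
  obtain ⟨c, rfl⟩ : a ∈ LinearMap.range (Finsupp.linearCombination K
      fun ab : ℕ × ℕ => y (u : K) ^ ab.1 * x (u : K) ^ ab.2) := by
    rw [Finsupp.range_linearCombination, span_monomials]
    trivial
  suffices c = 0 by simp [this]
  by_contra hc
  -- Evaluate on `e_N` for the least power `N` of `x` occurring: higher powers of `x` kill `e_N`.
  obtain ⟨⟨A, N⟩, hAN, hmin⟩ :=
    c.support.exists_min_image Prod.snd (Finsupp.support_nonempty_iff.2 hc)
  have key := DFunLike.congr_fun (DFunLike.congr_fun ha (Finsupp.single (N : ℤ) 1)) (A : ℤ)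
  rw [Finsupp.linearCombination_apply, Finsupp.sum, map_sum, LinearMap.sum_apply,
    Finsupp.finsetSum_apply, Finset.sum_eq_single (A, N)] at key
  · rw [map_smul, LinearMap.smul_apply, toTorus_monomial_single_natCast _ le_rfl, if_pos rfl,
      Finsupp.smul_apply, Finsupp.single_eq_same, smul_eq_mul] at key
    exact mul_ne_zero (Finsupp.mem_support_iff.1 hAN) (qFactorial_ne_zero hu N) key
  · rintro ⟨a, b⟩ hab hne
    rw [map_smul, LinearMap.smul_apply, toTorus_monomial_single_natCast _ (hmin _ hab)]
    split_ifs with hb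
    · subst hb
      rw [Finsupp.smul_apply, Finsupp.single_eq_of_ne (by simpa [eq_comm] using hne), smul_zero]
    · simp
  · exact fun h => (h hAN).elim

theorem exists_zpow_of_mul_eq_smul_mul (hu : ¬IsOfFinOrder u) {a b : QuantumWeyl K u}
    (ha : a ≠ 0) (hb : b ≠ 0) {c : K} (h : a * b = c • (b * a)) : ∃ k : ℤ, c = ↑(u ^ k) := by
  have hu₁ := Units.val_ne_one_of_not_isOfFinOrder hu
  have hinj := toTorus_injective hu hu₁
  simpa using QuantumTorus.exists_zpow_of_mul_eq_smul_mul hu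
    (range_toTorus_le hu₁ (AlgHom.mem_range_self _ a))
    (range_toTorus_le hu₁ (AlgHom.mem_range_self _ b))
    ((map_ne_zero_iff _ hinj).2 ha) ((map_ne_zero_iff _ hinj).2 hb)
    (by rw [← map_mul, ← map_mul, h, map_smul])

theorem mul_sub_mul_ne_one (hu : ¬IsOfFinOrder u) (a b : QuantumWeyl K u) :
    a * b - b * a ≠ 1 := by
  have hu₁ := Units.val_ne_one_of_not_isOfFinOrder hu
  intro h
  have h' := congrArg (toTorus u hu₁) h
  rw [map_sub, map_mul, map_mul, map_one] at h'
  exact QuantumTorus.mul_sub_mul_ne_one hu (range_toTorus_le hu₁ (AlgHom.mem_range_self _ a))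
    (range_toTorus_le hu₁ (AlgHom.mem_range_self _ b)) h'

theorem exists_zpow_of_algEquiv (hu : ¬IsOfFinOrder u) {v : K}
    (φ : QuantumWeyl K u ≃ₐ[K] QuantumWeyl K v) : ∃ k : ℤ, k ≠ 0 ∧ v = ↑(u ^ k) := by
  obtain ⟨k, hk⟩ := exists_zpow_of_mul_eq_smul_mul hu (a := φ.symm (x v))
    (b := φ.symm (x v * y v - y v * x v))
    ((map_ne_zero_iff _ φ.symm.injective).2 (x_ne_zero v))
    ((map_ne_zero_iff _ φ.symm.injective).2 (x_mul_y_sub_y_mul_x_ne_zero v))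
    (by rw [← map_mul, ← map_mul, x_mul_commutator, map_smul])
  refine ⟨k, ?_, hk⟩
  rintro rfl
  rw [zpow_zero, Units.val_one] at hk
  subst hk
  apply mul_sub_mul_ne_one hu (φ.symm (x 1)) (φ.symm (y 1))
  rw [← map_mul, ← map_mul, ← map_sub, x_mul_y_sub_y_mul_x, sub_self, zero_smul, zero_add,
    map_one]

end QuantumWeyl

theorem weyl1_iso_iff_general (K : Type*) [Field K] (q q' : K) (hq0 : q ≠ 0)
    (hq : ∀ k : ℕ, k ≠ 0 → q ^ k ≠ 1) :
    Nonempty (MQWeyl K 1 (fun _ => q) (fun _ _ => 1) ≃ₐ[K]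
        MQWeyl K 1 (fun _ => q') (fun _ _ => 1)) ↔ (q' = q ∨ q' = q⁻¹) := by
  set u := Units.mk0 q hq0
  have hu : ¬IsOfFinOrder u := fun h => by
    obtain ⟨n, hn, hun⟩ := isOfFinOrder_iff_pow_eq_one.1 h
    exact hq n hn.ne' (by simpa [u, Units.ext_iff] using hun)
  constructor
  · rintro ⟨φ⟩
    obtain ⟨k, hk, rfl⟩ := QuantumWeyl.exists_zpow_of_algEquiv hu φ
    obtain ⟨j, -, hj⟩ := QuantumWeyl.exists_zpow_of_algEquiv
      (fun h => hu (h.of_zpow hk)) φ.symm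
    have hzpowers : Subgroup.zpowers u = Subgroup.zpowers (u ^ k) :=
      le_antisymm (Subgroup.zpowers_le.2 ⟨j, Units.ext hj.symm⟩)
        (Subgroup.zpowers_le.2 (Subgroup.zpow_mem_zpowers u k))
    rcases (Subgroup.zpowers_eq_zpowers_iff hu).1 hzpowers with h | h
    · exact Or.inl (by rw [← h]; rfl)
    · exact Or.inr (by rw [← h]; simp [u])
  · rintro (rfl | rfl)
    exacts [⟨AlgEquiv.refl⟩, ⟨QuantumWeyl.swapEquiv hq0⟩]

/-- for `q` not a root of unity, `A_1^q(K) ≅ A_1^{q'}(K)` as `K`-algebras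
iff `q' = q` or `q' = q⁻¹`. -/
theorem weyl1_iso_iff (K : Type*) [Field K] (q q' : K) (hq0 : q ≠ 0) (hq0' : q' ≠ 0)
    (hq : ∀ k : ℕ, k ≠ 0 → q ^ k ≠ 1) :
    Nonempty (MQWeyl K 1 (fun _ => q) (fun _ _ => 1) ≃ₐ[K]
        MQWeyl K 1 (fun _ => q') (fun _ _ => 1)) ↔ (q' = q ∨ q' = q⁻¹) :=
  weyl1_iso_iff_general K q q' hq0 hq
end
end

section
/- In A' = A_n^{Q',Γ'}(K), define x*_i = x'_i, y*_i = λ_i y'_i if ε_i = 1, and x*_i = y'_i, y*_i = −λ_i x'_i if ε_i = −1, where λ_0 = 1 and λ_i = q_i^{(ε_i−1)/2}λ_{i−1}, and suppose q'_i = q_i^{ε_i} and Γ' is related to Γ by the sign rule. Then x*_j y*_j − q_j y*_j x*_j = λ_{j−1} z'_{j−1} for all j ∈ {1,...,n}, where z'_{j−1} = 1 + Σ_{k=1}^{j−1}(q'_k−1)y'_k x'_k. -/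
/-!  Multiparameter quantized Weyl algebras (Maltsiniotis).
Generators: `Sum.inl i ↦ xᵢ`, `Sum.inr i ↦ yᵢ`. -/

noncomputable section

open scoped BigOperators

/-! If `εⱼ = 1` the relation is the defining relation `x'ⱼ y'ⱼ - q'ⱼ y'ⱼ x'ⱼ = z'ⱼ₋₁` of `A'`, scaled
by `λⱼ = λⱼ₋₁`. If `εⱼ = -1`, exchanging `x'ⱼ` and `y'ⱼ` turns `q'ⱼ = qⱼ⁻¹` back into `qⱼ` at the
cost of a factor `-qⱼ`, which the sign of `y*ⱼ` and `λⱼ = qⱼ⁻¹ λⱼ₋₁` absorb. -/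

theorem Fin.prod_filter_val_lt_succ {M : Type*} [CommMonoid M] {n : ℕ} (f : Fin n → M)
    (j : Fin n) :
    ∏ k ∈ Finset.univ.filter (fun k : Fin n => (k : ℕ) < (j : ℕ) + 1), f k =
      (∏ k ∈ Finset.univ.filter (fun k : Fin n => (k : ℕ) < (j : ℕ)), f k) * f j := by
  have hinsert : Finset.univ.filter (fun k : Fin n => (k : ℕ) < (j : ℕ) + 1) =
      insert j (Finset.univ.filter (fun k : Fin n => (k : ℕ) < (j : ℕ))) := by
    ext k
    simp [le_iff_eq_or_lt, Fin.ext_iff]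
  rw [hinsert, Finset.prod_insert (by simp), mul_comm]

theorem mul_algebraMap_mul_sub {R A : Type*} [CommSemiring R] [Ring A] [Algebra R A]
    (a b : A) (c q : R) :
    a * (algebraMap R A c * b) - algebraMap R A q * (algebraMap R A c * b * a) =
      algebraMap R A c * (a * b - algebraMap R A q * (b * a)) := by
  simp only [mul_sub, ← mul_assoc, Algebra.commutes c a, ← map_mul, mul_comm q c]

namespace MQW

variable {K : Type*} [CommRing K] {n : ℕ} {Q : Fin n → K} {Γ : Fin n → Fin n → K}

theorem x_mul_y_sub (j : Fin n) :
    x K n Q Γ j * y K n Q Γ j - algebraMap K _ (Q j) * (y K n Q Γ j * x K n Q Γ j) =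
      z K n Q Γ (j : ℕ) := by
  have h := RingQuot.mkAlgHom_rel K (rel.weyl (K := K) (n := n) (Q := Q) (Γ := Γ) j)
  simp only [map_mul, map_add, map_sum, map_one, AlgHom.commutes] at h
  rw [x, y, h, z, add_assoc, add_sub_cancel_left]
  simp only [x, y, Fin.lt_def]

theorem y_mul_x_sub_of_mul_eq_one {q : K} {j : Fin n} (hq : q * Q j = 1) :
    y K n Q Γ j * x K n Q Γ j - algebraMap K _ q * (x K n Q Γ j * y K n Q Γ j) =
      algebraMap K _ (-q) * z K n Q Γ (j : ℕ) := by
  rw [← x_mul_y_sub, map_neg, neg_mul (α := MQWeyl K n Q Γ), mul_sub,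
    ← mul_assoc _ (algebraMap K _ (Q j)), ← map_mul, hq, map_one, one_mul, neg_sub]

end MQW

theorem mqw_star_relation_general (K : Type*) [Field K] (n : ℕ)
    (Q Q' : Fin n → K) (Γ' : Fin n → Fin n → K)
    (hQ : ∀ i, Q i ≠ 0)
    (ε : Fin n → ℤˣ)
    (hQQ' : ∀ i : Fin n, Q' i = Q i ^ (ε i : ℤ))
    (lam : ℕ → K)
    (hlam : ∀ m : ℕ, lam m =
      ∏ k ∈ Finset.univ.filter (fun k : Fin n => (k : ℕ) < m), Q k ^ (((ε k : ℤ) - 1) / 2))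
    (xs ys : Fin n → MQWeyl K n Q' Γ')
    (hstar : ∀ i : Fin n,
      (ε i = 1 → xs i = MQW.x K n Q' Γ' i ∧ ys i = lam ((i : ℕ) + 1) • MQW.y K n Q' Γ' i) ∧
      (ε i = -1 → xs i = MQW.y K n Q' Γ' i ∧ ys i = -(lam ((i : ℕ) + 1)) • MQW.x K n Q' Γ' i)) :
    ∀ j : Fin n,
      xs j * ys j - algebraMap K (MQWeyl K n Q' Γ') (Q j) * (ys j * xs j) =
        algebraMap K (MQWeyl K n Q' Γ') (lam (j : ℕ)) * MQW.z K n Q' Γ' (j : ℕ) := by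
  intro j
  have hstep : lam ((j : ℕ) + 1) = lam j * Q j ^ (((ε j : ℤ) - 1) / 2) := by
    rw [hlam, hlam, Fin.prod_filter_val_lt_succ]
  rcases Int.units_eq_one_or (ε j) with hε | hε
  · obtain ⟨hx, hy⟩ := (hstar j).1 hε
    have hQj : Q' j = Q j := by simp [hQQ' j, hε]
    rw [hx, hy, Algebra.smul_def, mul_algebraMap_mul_sub, ← hQj, MQW.x_mul_y_sub, hstep, hε]
    norm_num
  · obtain ⟨hx, hy⟩ := (hstar j).2 hε
    have hQj : Q j * Q' j = 1 := by simp [hQQ' j, hε, hQ j]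
    rw [hx, hy, Algebra.smul_def, mul_algebraMap_mul_sub, MQW.y_mul_x_sub_of_mul_eq_one hQj,
      ← mul_assoc, ← map_mul, hstep, hε]
    simp [hQ j]

/-- with `x*ᵢ, y*ᵢ` defined from the sign vector `ε` and
`λᵢ = qᵢ^{(εᵢ-1)/2} λ_{i-1}`, `λ₀ = 1`, one has
`x*ⱼ y*ⱼ - qⱼ y*ⱼ x*ⱼ = λ_{j-1} z'_{j-1}` in `A' = A_n^{Q',Γ'}(K)`. -/
theorem mqw_star_relation (K : Type*) [Field K] (n : ℕ)
    (Q Q' : Fin n → K) (Γ Γ' : Fin n → Fin n → K)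
    (hQ : ∀ i, Q i ≠ 0) (hQ' : ∀ i, Q' i ≠ 0)
    (hΓ : ∀ i j, Γ i j * Γ j i = 1) (hΓd : ∀ i, Γ i i = 1)
    (hΓ' : ∀ i j, Γ' i j * Γ' j i = 1) (hΓd' : ∀ i, Γ' i i = 1)
    (ε : Fin n → ℤˣ)
    (hQQ' : ∀ i : Fin n, Q' i = Q i ^ (ε i : ℤ))
    (hΓΓ' : ∀ i j : Fin n, i < j →
      (ε i = 1 → ε j = 1 → Γ' i j = Γ i j) ∧
      (ε i = -1 → ε j = 1 → Γ' i j = Γ j i) ∧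
      (ε i = 1 → ε j = -1 → Γ' i j = (Q i)⁻¹ * Γ j i) ∧
      (ε i = -1 → ε j = -1 → Γ' i j = Q i * Γ i j))
    (lam : ℕ → K)
    (hlam : ∀ m : ℕ, lam m =
      ∏ k ∈ Finset.univ.filter (fun k : Fin n => (k : ℕ) < m), Q k ^ (((ε k : ℤ) - 1) / 2))
    (xs ys : Fin n → MQWeyl K n Q' Γ')
    (hstar : ∀ i : Fin n,
      (ε i = 1 → xs i = MQW.x K n Q' Γ' i ∧ ys i = lam ((i : ℕ) + 1) • MQW.y K n Q' Γ' i) ∧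
      (ε i = -1 → xs i = MQW.y K n Q' Γ' i ∧ ys i = -(lam ((i : ℕ) + 1)) • MQW.x K n Q' Γ' i)) :
    ∀ j : Fin n,
      xs j * ys j - algebraMap K (MQWeyl K n Q' Γ') (Q j) * (ys j * xs j) =
        algebraMap K (MQWeyl K n Q' Γ') (lam (j : ℕ)) * MQW.z K n Q' Γ' (j : ℕ) :=
  mqw_star_relation_general K n Q Q' Γ' hQ ε hQQ' lam hlam xs ys hstar
end
end
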